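/- arXiv:0904.2083 — 4 statements merged into one kernel-verified Lean document; each statement's English description precedes it below -/
import Mathlib

section
/- Let p be a prime and A an abelian group such that the p-torsion subgroup A[p] is finite. Then p^∞A = ⋂_{n≥1} pⁿA is p-divisible: for every a ∈ p^∞A there exists b ∈ p^∞A with p·b = a. (The König's-lemma core of Lemma 2.9, part 6.) -/
/-- Let `p` be a prime and `A` an abelian group whose `p`-torsion subgroup `A[p]` is
finite. Then `p^∞A = ⋂_{n≥1} pⁿA` is `p`-divisible. -/
theorem stmt_5 {A : Type*} [AddCommGroup A] (p : ℕ) (hp : p.Prime)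
    (hfin : {x : A | p • x = 0}.Finite) :
    ∀ a : A, (∀ n : ℕ, 1 ≤ n → ∃ x : A, p ^ n • x = a) →
      ∃ b : A, (∀ n : ℕ, 1 ≤ n → ∃ x : A, p ^ n • x = b) ∧ p • b = a := by
  intro a ha
  -- the decreasing sequence of candidate sets
  set S : ℕ → Set A := fun n => {b | p • b = a ∧ ∃ x : A, p ^ n • x = b} with hS
  -- a fixed element with p • b0 = a
  obtain ⟨b0, hb0⟩ := ha 1 le_rfl
  rw [pow_one] at hb0
  -- each S n is finite
  have hSfin : ∀ n, (S n).Finite := by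
    intro n
    apply Set.Finite.subset ((hfin.image (· + b0)))
    rintro b ⟨hb, -⟩
    exact ⟨b - b0, by simp [smul_sub, hb, hb0], by simp⟩
  -- each S n is nonempty
  have hSne : ∀ n, (S n).Nonempty := by
    intro n
    obtain ⟨x, hx⟩ := ha (n + 1) (Nat.succ_le_succ (Nat.zero_le n))
    refine ⟨p ^ n • x, ?_, x, rfl⟩
    rw [smul_smul, ← pow_succ', hx]
  -- the sequence is decreasing
  have hmono : ∀ {m n : ℕ}, n ≤ m → S m ⊆ S n := by
    intro m n hnm b hb
    obtain ⟨hb1, x, hx⟩ := hb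
    refine ⟨hb1, p ^ (m - n) • x, ?_⟩
    rw [smul_smul, ← pow_add, Nat.add_sub_cancel' hnm, hx]
  -- the cardinalities stabilize
  have hne : (Set.range fun n => (S n).ncard).Nonempty := ⟨(S 0).ncard, 0, rfl⟩
  obtain ⟨N, hN⟩ := Nat.sInf_mem hne
  have hstab : ∀ n, N ≤ n → S n = S N := by
    intro n hn
    have hN' : (S N).ncard = sInf (Set.range fun n => (S n).ncard) := hN
    refine Set.eq_of_subset_of_ncard_le (hmono hn) ?_ (hSfin N)
    exact hN' ▸ Nat.sInf_le ⟨n, rfl⟩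
  obtain ⟨b, hb1, hb2⟩ := hSne N
  refine ⟨b, ?_, hb1⟩
  intro n _
  rcases le_total n N with h | h
  · exact (hmono h ⟨hb1, hb2⟩).2
  · have : b ∈ S n := (hstab n h).symm ▸ (show b ∈ S N from ⟨hb1, hb2⟩)
    exact this.2
end

section
/- Let p be a prime and A an abelian group such that A[p] is finite, and let g ∈ A. Then g ∈ ⋂_{n≥1} pⁿA if and only if there exists a sequence (gᵢ)_{i∈ℕ} of elements of A with g₀ = g and gᵢ = p·gᵢ₊₁ for all i ∈ ℕ. (The tree/infinite-branch characterization established in the proof of Lemma 2.9, part 6.) -/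
private lemma step_lemma {A : Type*} [AddCommGroup A] (p : ℕ)
    (hfin : {x : A | p • x = 0}.Finite) (g : A)
    (hg : ∀ n : ℕ, 1 ≤ n → ∃ x : A, p ^ n • x = g) :
    ∃ h : A, p • h = g ∧ ∀ n : ℕ, 1 ≤ n → ∃ x : A, p ^ n • x = h := by
  set C : ℕ → Set A := fun n => {x | p • x = g ∧ ∃ y, p ^ n • y = x} with hC
  have hne : ∀ n, (C n).Nonempty := by
    intro n
    obtain ⟨z, hz⟩ := hg (n + 1) (by omega)
    refine ⟨p ^ n • z, ?_, z, rfl⟩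
    rw [← hz, smul_smul, ← pow_succ']
  have hanti : ∀ {m n : ℕ}, m ≤ n → C n ⊆ C m := by
    intro m n hmn x hx
    obtain ⟨h1, y, hy⟩ := hx
    refine ⟨h1, p ^ (n - m) • y, ?_⟩
    rw [smul_smul, ← pow_add]
    rwa [Nat.add_sub_cancel' hmn]
  -- C 0 is finite
  obtain ⟨x₀, hx₀, -⟩ := hne 0
  have hC0 : (C 0).Finite := by
    have : C 0 ⊆ (fun y => y + x₀) '' {x : A | p • x = 0} := by
      intro x hx
      refine ⟨x - x₀, ?_, by simp⟩
      simp only [Set.mem_setOf_eq, smul_sub, hx.1, hx₀, sub_self]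
    exact (hfin.image _).subset this
  have hCfin : ∀ n, (C n).Finite := fun n => hC0.subset (hanti (Nat.zero_le n))
  set f : ℕ → ℕ := fun n => (hCfin n).toFinset.card with hf
  obtain ⟨N, hN⟩ : ∃ N, ∀ k, f N ≤ f k := by
    obtain ⟨N, hN⟩ := Nat.sInf_mem (Set.range_nonempty f)
    exact ⟨N, fun k => hN ▸ Nat.sInf_le ⟨k, rfl⟩⟩
  have heq : ∀ n, N ≤ n → C n = C N := by
    intro n hn
    have hsub : (hCfin n).toFinset ⊆ (hCfin N).toFinset := by
      intro x hx
      simp only [Set.Finite.mem_toFinset] at hx ⊢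
      exact hanti hn hx
    have := Finset.eq_of_subset_of_card_le hsub (hN n)
    have : (hCfin n).toFinset = (hCfin N).toFinset := this
    rw [← Set.Finite.coe_toFinset (hCfin n), ← Set.Finite.coe_toFinset (hCfin N), this]
  obtain ⟨h, hh⟩ := hne N
  have hall : ∀ n, h ∈ C n := by
    intro n
    have : h ∈ C (max n N) := by rw [heq _ (le_max_right n N)]; exact hh
    exact hanti (le_max_left n N) this
  exact ⟨h, (hall 0).1, fun n _ => (hall n).2⟩

/-- Let `p` be a prime and `A` an abelian group with `A[p]` finite. Then `g ∈ ⋂_{n≥1} pⁿA`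
iff there is a sequence `(gᵢ)` in `A` with `g₀ = g` and `gᵢ = p • gᵢ₊₁` for all `i`. -/
theorem stmt_7 {A : Type*} [AddCommGroup A] (p : ℕ) (hp : p.Prime)
    (hfin : {x : A | p • x = 0}.Finite) (g : A) :
    (∀ n : ℕ, 1 ≤ n → ∃ x : A, p ^ n • x = g) ↔
      ∃ s : ℕ → A, s 0 = g ∧ ∀ i : ℕ, s i = p • s (i + 1) := by
  constructor
  · intro hg
    set P : A → Prop := fun h => ∀ n : ℕ, 1 ≤ n → ∃ x : A, p ^ n • x = h with hP
    have step : ∀ h : A, P h → ∃ h' : A, h = p • h' ∧ P h' := by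
      intro h hh
      obtain ⟨h', h1, h2⟩ := step_lemma p hfin h hh
      exact ⟨h', h1.symm, h2⟩
    let s : ℕ → {h : A // P h} := fun n =>
      Nat.rec ⟨g, hg⟩ (fun _ ih => ⟨Classical.choose (step ih.1 ih.2),
        (Classical.choose_spec (step ih.1 ih.2)).2⟩) n
    refine ⟨fun n => (s n).1, rfl, fun i => ?_⟩
    exact (Classical.choose_spec (step (s i).1 (s i).2)).1
  · rintro ⟨s, hs0, hsucc⟩ n hn
    refine ⟨s n, ?_⟩
    rw [← hs0]
    clear hs0 hn
    induction n with
    | zero => simp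
    | succ k ih =>
      rw [pow_succ', mul_smul, smul_comm, ← hsucc k, ih]
end

section
/- Let p be a prime and A an abelian group such that A[p] is finite. Then the image of the projection homomorphism π : Ã → A, (xᵢ)_{i∈ℕ} ↦ x₀, is exactly p^∞A = ⋂_{n≥1} pⁿA, and the kernel of π is the Tate module T_pA; thus there is an exact sequence 0 → T_pA → Ã → p^∞A → 0. (Abstract form of Lemma 3.16.) -/
/-- The group `Ã` of sequences `(xᵢ)` in `A` with `xᵢ = p • xᵢ₊₁` for all `i`,
as a subgroup of the product group `ℕ → A`. -/
def tildeGroup (p : ℕ) (A : Type*) [AddCommGroup A] : AddSubgroup (ℕ → A) where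
  carrier := {s | ∀ i : ℕ, s i = p • s (i + 1)}
  zero_mem' := by intro i; simp
  add_mem' := by
    intro s t hs ht i
    simp only [Pi.add_apply, smul_add]
    rw [← hs i, ← ht i]
  neg_mem' := by
    intro s hs i
    simp only [Pi.neg_apply, smul_neg]
    rw [← hs i]

/-- The subgroup `p^∞A = ⋂_{n≥1} pⁿA` of an abelian group `A`. -/
def pinfSubgroup (p : ℕ) (A : Type*) [AddCommGroup A] : AddSubgroup A where
  carrier := {a | ∀ n : ℕ, 1 ≤ n → ∃ x : A, p ^ n • x = a}
  zero_mem' := fun _ _ => ⟨0, smul_zero _⟩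
  add_mem' := by
    intro a b ha hb n hn
    obtain ⟨x, hx⟩ := ha n hn
    obtain ⟨y, hy⟩ := hb n hn
    exact ⟨x + y, by rw [smul_add, hx, hy]⟩
  neg_mem' := by
    intro a ha n hn
    obtain ⟨x, hx⟩ := ha n hn
    exact ⟨-x, by rw [smul_neg, hx]⟩

/-- The Tate module `T_pA`: the subgroup of `Ã` of sequences with `x₀ = 0`. -/
def tateModule (p : ℕ) (A : Type*) [AddCommGroup A] : AddSubgroup ↥(tildeGroup p A) where
  carrier := {s | (s : ℕ → A) 0 = 0}
  zero_mem' := rfl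
  add_mem' := by
    intro s t hs ht
    simp only [Set.mem_setOf_eq] at *
    simp [AddSubgroup.coe_add, Pi.add_apply, hs, ht]
  neg_mem' := by
    intro s hs
    simp only [Set.mem_setOf_eq] at *
    simp [hs]

open CategoryTheory

theorem exists_compatible_seq_of_finite {X : ℕ → Type*} [∀ n, Finite (X n)]
    [∀ n, Nonempty (X n)] (f : ∀ n, X (n + 1) → X n) :
    ∃ x : ∀ n, X n, ∀ n, f n (x (n + 1)) = x n := by
  let F : ℕᵒᵖ ⥤ Type _ := Functor.ofOpSequence (X := X) fun n => TypeCat.ofHom (f n)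
  have : ∀ j, Finite (F.obj j) := fun j => inferInstanceAs (Finite (X j.unop))
  have : ∀ j, Nonempty (F.obj j) := fun j => inferInstanceAs (Nonempty (X j.unop))
  obtain ⟨u, hu⟩ := nonempty_sections_of_finite_inverse_system F
  refine ⟨fun n => u (Opposite.op n), fun n => ?_⟩
  have := hu (homOfLE (Nat.le_add_right n 1)).op
  rw [Functor.ofOpSequence_map_homOfLE_succ] at this
  exact this

section

variable {A : Type*} [AddCommGroup A]

theorem finite_setOf_nsmul_eq {n : ℕ} (h : {x : A | n • x = 0}.Finite) (a : A) :
    {x : A | n • x = a}.Finite := by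
  rcases em (∃ x₀ : A, n • x₀ = a) with ⟨x₀, rfl⟩ | hempty
  · refine (h.image (x₀ + ·)).subset fun x hx => ⟨-x₀ + x, ?_, by simp⟩
    simp_all [smul_add]
  · convert Set.finite_empty
    exact Set.eq_empty_of_forall_notMem fun x hx => hempty ⟨x, hx⟩

theorem finite_setOf_pow_nsmul_eq_zero {p : ℕ} (h : {x : A | p • x = 0}.Finite) (k : ℕ) :
    {x : A | p ^ k • x = 0}.Finite := by
  induction k with
  | zero => simp
  | succ k ih =>
    simp_rw [pow_succ, mul_smul]
    exact ih.preimage' fun b _ => finite_setOf_nsmul_eq h b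

theorem pow_nsmul_apply_eq_apply_zero {p : ℕ} {s : ℕ → A} (hs : s ∈ tildeGroup p A) (k : ℕ) :
    p ^ k • s k = s 0 := by
  induction k with
  | zero => simp
  | succ k ih => rw [pow_succ, mul_smul, ← hs k, ih]

theorem apply_zero_mem_pinfSubgroup {p : ℕ} {s : ℕ → A} (hs : s ∈ tildeGroup p A) :
    s 0 ∈ pinfSubgroup p A :=
  fun n _ => ⟨s n, pow_nsmul_apply_eq_apply_zero hs n⟩

/-- The compatible choices of `p`-power roots of `a` are found by König's lemma, applied to the
sets `{x | pⁿ • x = a}`, which are nonempty since `a ∈ p^∞A` and finite since `A[p]` is. -/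
theorem exists_mem_tildeGroup_apply_zero_eq {p : ℕ} (hfin : {x : A | p • x = 0}.Finite)
    {a : A} (ha : a ∈ pinfSubgroup p A) : ∃ s ∈ tildeGroup p A, s 0 = a := by
  have : ∀ n, Finite {x : A // p ^ n • x = a} := fun n =>
    (finite_setOf_nsmul_eq (finite_setOf_pow_nsmul_eq_zero hfin n) a).to_subtype
  have : ∀ n, Nonempty {x : A // p ^ n • x = a} := fun n => by
    rcases n with _ | n
    · exact ⟨⟨a, one_smul ℕ a⟩⟩
    · obtain ⟨x, hx⟩ := ha (n + 1) n.succ_pos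
      exact ⟨⟨x, hx⟩⟩
  obtain ⟨x, hx⟩ := exists_compatible_seq_of_finite fun n (y : {x : A // p ^ (n + 1) • x = a}) =>
    (⟨p • y.1, by rw [← mul_smul, ← pow_succ, y.2]⟩ : {x : A // p ^ n • x = a})
  exact ⟨fun n => (x n).1, fun n => (congrArg Subtype.val (hx n)).symm, by simpa using (x 0).2⟩

end

theorem stmt_8_general {A : Type*} [AddCommGroup A] (p : ℕ)
    (hfin : {x : A | p • x = 0}.Finite) :
    ∀ π : ↥(tildeGroup p A) →+ A, (∀ s : ↥(tildeGroup p A), π s = (s : ℕ → A) 0) →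
      π.range = pinfSubgroup p A ∧ π.ker = tateModule p A := by
  intro π hπ
  constructor
  · ext a
    constructor
    · rintro ⟨s, rfl⟩
      exact hπ s ▸ apply_zero_mem_pinfSubgroup s.2
    · intro ha
      obtain ⟨s, hs, rfl⟩ := exists_mem_tildeGroup_apply_zero_eq hfin ha
      exact ⟨⟨s, hs⟩, hπ _⟩
  · ext s
    simp only [AddMonoidHom.mem_ker, hπ]
    rfl

/-- Let `p` be a prime and `A` an abelian group with `A[p]` finite. For the projection
`π : Ã → A`, `(xᵢ) ↦ x₀`, the image of `π` is exactly `p^∞A = ⋂_{n≥1} pⁿA` and the kernel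
of `π` is the Tate module `T_pA`; thus `0 → T_pA → Ã → p^∞A → 0` is exact. -/
theorem stmt_8 {A : Type*} [AddCommGroup A] (p : ℕ) (hp : p.Prime)
    (hfin : {x : A | p • x = 0}.Finite) :
    ∀ π : ↥(tildeGroup p A) →+ A, (∀ s : ↥(tildeGroup p A), π s = (s : ℕ → A) 0) →
      π.range = pinfSubgroup p A ∧ π.ker = tateModule p A :=
  stmt_8_general p hfin
end

section
/- Let p be a prime and A an abelian group in which every element has order a finite power of p and in which A[p] is finite. Then A is the internal direct sum of a divisible subgroup D and a finite subgroup F: there exist subgroups D and F of A with D divisible, F finite, D ∩ F = {0}, and D + F = A. (Abstract form of Lemma 3.21, part (i).) -/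
/-!
Let `D = ⋂ₙ pⁿA`. The sets `A[p] ∩ pⁿA` form a decreasing chain of subsets of the finite set
`A[p]`, so they stabilise at some `N`, i.e. `A[p] ∩ p^N A ⊆ D`. This makes `D` `p`-divisible,
hence divisible because every element has `p`-power order, so `D` is an injective `ℤ`-module and
has a complement `F`. Since `F ∩ D = 0`, the stabilised chain forces `p^N F = 0`, so `F` lies in
`A[p^N]`, which is finite because `A[p]` is.
-/

theorem AddSubgroup.exists_isCompl_of_divisibleBy {A : Type*} [AddCommGroup A] (D : AddSubgroup A)
    [DivisibleBy D ℤ] :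
    ∃ F : AddSubgroup A, IsCompl D F := by
  obtain ⟨r, hr⟩ := (Module.Baer.of_divisible D).extension_property_addMonoidHom D.subtype
    Subtype.val_injective (AddMonoidHom.id D)
  have hr_of_mem : ∀ x (hx : x ∈ D), (r x : A) = x := fun x hx =>
    congrArg Subtype.val (DFunLike.congr_fun hr ⟨x, hx⟩)
  refine ⟨r.ker, AddSubgroup.disjoint_def.2 fun {x} hxD hxr => ?_, codisjoint_iff.2 ?_⟩
  · rw [← hr_of_mem x hxD, AddMonoidHom.mem_ker.1 hxr, ZeroMemClass.coe_zero]
  · refine eq_top_iff.2 fun x _ =>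
      AddSubgroup.mem_sup.2 ⟨r x, (r x).2, x - r x, ?_, add_sub_cancel _ x⟩
    rw [AddMonoidHom.mem_ker, map_sub, sub_eq_zero]
    exact Subtype.ext (hr_of_mem _ (r x).2).symm

namespace AddCommGroup

variable {A : Type*} [AddCommGroup A]

theorem surjective_nsmul_of_surjective_prime_nsmul {p : ℕ} (hp : p.Prime)
    (htor : ∀ x : A, ∃ m : ℕ, p ^ m • x = 0) (hdiv : Function.Surjective fun x : A => p • x)
    {n : ℕ} (hn : n ≠ 0) : Function.Surjective fun x : A => n • x := by
  have hpow : ∀ k, Function.Surjective fun x : A => p ^ k • x := fun k => by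
    induction k with
    | zero => exact fun x => ⟨x, by simp⟩
    | succ k ih => simpa only [pow_succ, mul_smul, Function.comp_def] using ih.comp hdiv
  obtain ⟨k, u, hpu, rfl⟩ := Nat.exists_eq_pow_mul_and_not_dvd hn p hp.ne_one
  have hcoprime : Function.Surjective fun x : A => u • x := fun x => by
    obtain ⟨m, hm⟩ := htor x
    have hux : u.Coprime (addOrderOf x) :=
      ((hp.coprime_iff_not_dvd.2 hpu).symm.pow_right m).coprime_dvd_right
        (addOrderOf_dvd_of_nsmul_eq_zero hm)
    obtain ⟨a, ha⟩ := exists_nsmul_eq_self_of_coprime hux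
    exact ⟨a • x, show u • a • x = x by rwa [smul_comm]⟩
  simpa only [mul_smul, Function.comp_def] using (hpow k).comp hcoprime

def nsmulRange (A : Type*) [AddCommGroup A] (n : ℕ) : AddSubgroup A :=
  (nsmulAddMonoidHom n).range

theorem mem_nsmulRange {n : ℕ} {x : A} : x ∈ nsmulRange A n ↔ ∃ y, n • y = x :=
  AddMonoidHom.mem_range

theorem nsmulRange_le_of_dvd {m n : ℕ} (h : m ∣ n) : nsmulRange A n ≤ nsmulRange A m := by
  obtain ⟨k, rfl⟩ := h
  rintro _ ⟨y, rfl⟩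
  exact ⟨k • y, by simp only [nsmulAddMonoidHom_apply, smul_smul]⟩

/-- `p^ω A`, the first Ulm subgroup. -/
def infiniteHeight (A : Type*) [AddCommGroup A] (p : ℕ) : AddSubgroup A :=
  ⨅ n, nsmulRange A (p ^ n)

theorem mem_infiniteHeight {p : ℕ} {x : A} :
    x ∈ infiniteHeight A p ↔ ∀ n, x ∈ nsmulRange A (p ^ n) :=
  AddSubgroup.mem_iInf

theorem finite_setOf_pow_nsmul_eq_zero (p : ℕ) (hfin : {x : A | p • x = 0}.Finite) (n : ℕ) :
    {x : A | p ^ n • x = 0}.Finite := by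
  induction n with
  | zero => simp
  | succ n ih =>
    have hfiber : ∀ b : A, ((p • ·) ⁻¹' {b} : Set A).Finite := fun b => by
      rcases Set.eq_empty_or_nonempty ((p • ·) ⁻¹' {b} : Set A) with h | ⟨x₀, hx₀⟩
      · simp [h]
      refine (hfin.image (x₀ + ·)).subset fun x hx => ⟨x - x₀, ?_, add_sub_cancel x₀ x⟩
      simp_all [smul_sub]
    simpa [pow_succ, mul_smul] using ih.preimage' fun b _ => hfiber b

theorem exists_setOf_nsmul_eq_zero_inter_nsmulRange_subset (p : ℕ)
    (hfin : {x : A | p • x = 0}.Finite) :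
    ∃ N, {z : A | p • z = 0} ∩ nsmulRange A (p ^ N) ⊆ infiniteHeight A p := by
  set S : ℕ → Set A := fun n => {z | p • z = 0} ∩ (nsmulRange A (p ^ n) : Set A)
  have hS : (Set.range S).Finite :=
    hfin.finite_subsets.subset (Set.range_subset_iff.2 fun n => Set.inter_subset_left)
  obtain ⟨_, hmin⟩ := hS.exists_minimal (Set.range_nonempty S)
  obtain ⟨N, rfl⟩ := hmin.prop
  refine ⟨N, fun z hz => mem_infiniteHeight.2 fun n => ?_⟩
  have hsub : S (max n N) ⊆ S N :=
    Set.inter_subset_inter_right _ (nsmulRange_le_of_dvd (pow_dvd_pow p (le_max_right n N)))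
  have hz' : z ∈ S (max n N) := (hmin.eq_of_subset ⟨_, rfl⟩ hsub).symm ▸ hz
  exact nsmulRange_le_of_dvd (pow_dvd_pow p (le_max_left n N)) hz'.2

theorem surjective_nsmul_infiniteHeight {p N : ℕ}
    (hN : {z : A | p • z = 0} ∩ nsmulRange A (p ^ N) ⊆ infiniteHeight A p) :
    Function.Surjective fun e : infiniteHeight A p => p • e := by
  rintro ⟨d, hd⟩
  have hdiv : ∀ n, ∃ e ∈ nsmulRange A (p ^ n), p • e = d := fun n => by
    obtain ⟨y, rfl⟩ := mem_nsmulRange.1 (mem_infiniteHeight.1 hd (n + 1))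
    exact ⟨p ^ n • y, ⟨y, rfl⟩, by rw [smul_smul, ← pow_succ']⟩
  obtain ⟨e, he, rfl⟩ := hdiv N
  refine ⟨⟨e, mem_infiniteHeight.2 fun n => ?_⟩, rfl⟩
  obtain ⟨e', he', hpe'⟩ := hdiv (max n N)
  have hdiff : e - e' ∈ infiniteHeight A p :=
    hN ⟨show p • (e - e') = 0 by rw [smul_sub, hpe', sub_self],
      sub_mem he (nsmulRange_le_of_dvd (pow_dvd_pow p (le_max_right n N)) he')⟩
  have he_max : e ∈ nsmulRange A (p ^ max n N) := by
    simpa using add_mem (mem_infiniteHeight.1 hdiff (max n N)) he'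
  exact nsmulRange_le_of_dvd (pow_dvd_pow p (le_max_left n N)) he_max

theorem pow_nsmul_eq_zero_of_disjoint {p N : ℕ}
    (hN : {z : A | p • z = 0} ∩ nsmulRange A (p ^ N) ⊆ infiniteHeight A p)
    (htor : ∀ x : A, ∃ m : ℕ, p ^ m • x = 0) {F : AddSubgroup A}
    (hF : Disjoint (infiniteHeight A p) F) {x : A} (hx : x ∈ F) : p ^ N • x = 0 := by
  suffices h : ∀ m, ∀ y ∈ F, y ∈ nsmulRange A (p ^ N) → p ^ m • y = 0 → y = 0 by
    obtain ⟨m, hm⟩ := htor x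
    exact h m _ (F.nsmul_mem hx _) ⟨x, rfl⟩ (by rw [smul_comm, hm, smul_zero])
  intro m
  induction m with
  | zero => intro y _ _ hy; simpa using hy
  | succ m ih =>
    intro y hyF hyN hy
    have hpy : p • y = 0 :=
      ih _ (F.nsmul_mem hyF p) (AddSubgroup.nsmul_mem _ hyN p) (by rwa [smul_smul, ← pow_succ])
    exact AddSubgroup.disjoint_def.1 hF (hN ⟨hpy, hyN⟩) hyF

end AddCommGroup

/-- Let `p` be a prime and `A` an abelian group in which every element has order a finite
power of `p` and whose `p`-torsion `A[p]` is finite. Then `A` is the internal direct sum of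
a divisible subgroup `D` and a finite subgroup `F`. -/
theorem stmt_10 {A : Type*} [AddCommGroup A] (p : ℕ) (hp : p.Prime)
    (htor : ∀ x : A, ∃ m : ℕ, p ^ m • x = 0)
    (hfin : {x : A | p • x = 0}.Finite) :
    ∃ D F : AddSubgroup A,
      (∀ d ∈ D, ∀ n : ℕ, 1 ≤ n → ∃ e ∈ D, n • e = d) ∧
      (F : Set A).Finite ∧ D ⊓ F = ⊥ ∧ D ⊔ F = ⊤ := by
  obtain ⟨N, hN⟩ := AddCommGroup.exists_setOf_nsmul_eq_zero_inter_nsmulRange_subset p hfin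
  set D : AddSubgroup A := AddCommGroup.infiniteHeight A p
  have hDtor : ∀ e : D, ∃ m : ℕ, p ^ m • e = 0 := fun e => by
    obtain ⟨m, hm⟩ := htor e
    exact ⟨m, Subtype.ext (by simpa using hm)⟩
  have hDdiv : ∀ {n : ℕ}, n ≠ 0 → Function.Surjective fun e : D => n • e :=
    AddCommGroup.surjective_nsmul_of_surjective_prime_nsmul hp hDtor
      (AddCommGroup.surjective_nsmul_infiniteHeight hN)
  let : DivisibleBy D ℕ := divisibleByOfSMulRightSurj D ℕ hDdiv
  let := AddGroup.divisibleByIntOfDivisibleByNat D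
  obtain ⟨F, hDF⟩ := D.exists_isCompl_of_divisibleBy
  have hFfin : (F : Set A).Finite :=
    (AddCommGroup.finite_setOf_pow_nsmul_eq_zero p hfin N).subset fun _ hx =>
      AddCommGroup.pow_nsmul_eq_zero_of_disjoint hN htor hDF.disjoint hx
  refine ⟨D, F, fun d hd n hn => ?_, hFfin, hDF.inf_eq_bot, hDF.sup_eq_top⟩
  obtain ⟨⟨e, he⟩, hed⟩ := hDdiv (n := n) (by omega) ⟨d, hd⟩
  exact ⟨e, he, congrArg Subtype.val hed⟩
end
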